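/- arXiv:1711.07912 — 5 statements merged into one kernel-verified Lean document; each statement's English description precedes it below -/
import Mathlib

section
/- For every t ≥ 0, every phase S ∈ {1,…,N}, and every W ∈ {0,…,M}, the function Q ↦ V_t(S,Q,W) is nondecreasing on {0,…,B}. -/
open Finset Filter Topology

/-- Parameters of the multi-server sleeping MDP with MMPP arrivals. -/
structure MDPParams where
  /-- number of MMPP phases -/
  N : ℕ
  /-- number of servers -/
  M : ℕ
  /-- buffer size -/
  B : ℕ
  /-- arrival rates per phase -/
  lam : ℕ → ℝ
  /-- phase transition rates -/
  sig : ℕ → ℕ → ℝ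
  /-- service rate -/
  mu : ℝ
  /-- slot length -/
  Δ : ℝ
  /-- discount factor -/
  r : ℝ
  /-- delay weight -/
  ω : ℝ
  /-- per-slot active energy -/
  Eon : ℝ
  /-- switching energy -/
  Esw : ℝ

/-- Switching cost `s(W,a) = max(a−W,0)·E_sw`. -/
noncomputable def sCost (p : MDPParams) (W a : ℕ) : ℝ := ((a - W : ℕ) : ℝ) * p.Esw

/-- One-step cost-plus-continuation `w` built from a value function `V`. -/
noncomputable def wStep (p : MDPParams) (V : ℕ → ℕ → ℕ → ℝ) (S Q a : ℕ) : ℝ :=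
  p.ω * Q + a * p.Eon + p.r *
    ((∑ S' ∈ (Finset.Icc 1 p.N).erase S, p.sig S S' * p.Δ * V S' Q a)
      + p.lam S * p.Δ * (if Q < p.B then (1 : ℝ) else 0) * V S (Q + 1) a
      + (a : ℝ) * p.mu * p.Δ * (if 0 < Q then (1 : ℝ) else 0) * V S (Q - 1) a
      + (1 - (a : ℝ) * p.mu * p.Δ * (if 0 < Q then (1 : ℝ) else 0)
          - p.lam S * p.Δ * (if Q < p.B then (1 : ℝ) else 0)
          - (∑ S' ∈ (Finset.Icc 1 p.N).erase S, p.sig S S') * p.Δ) * V S Q a)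

/-- Finite-horizon value iteration: `V_0 ≡ 0`,
`V_{t+1}(S,Q,W) = min_{a ∈ {0,…,M}} (s(W,a) + w_t(S,Q,a))`. -/
noncomputable def Vit (p : MDPParams) : ℕ → ℕ → ℕ → ℕ → ℝ
  | 0 => fun _ _ _ => 0
  | t + 1 => fun S Q W =>
      (Finset.Iic p.M).inf' Finset.nonempty_Iic
        (fun a => sCost p W a + wStep p (Vit p t) S Q a)

/-- `u_t(S,Q,W,a) = s(W,a) + w_t(S,Q,a)`. -/
noncomputable def uIt (p : MDPParams) (t : ℕ) (S Q W a : ℕ) : ℝ :=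
  sCost p W a + wStep p (Vit p t) S Q a

/-! Induction on `t`. For `Q ≤ B`, `w_t(S,Q,a)` is `ω·Q + a·E_on` plus `r` times an average
of `V_t` over the successor states `(S',Q)`, `(S, min(Q+1,B))`, `(S,Q-1)`, `(S,Q)`, whose
weights do not depend on `Q` and are nonnegative because `Δ` is small. Each successor queue
length is monotone in `Q`, so `w_t` inherits monotonicity from `V_t`, and so does the
pointwise minimum `V_{t+1}`. -/

noncomputable def MDPParams.phaseExitRate (p : MDPParams) (S : ℕ) : ℝ :=
  ∑ S' ∈ (Finset.Icc 1 p.N).erase S, p.sig S S'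

/-- For `Q ≤ B` the boundary indicators are absorbed into the arguments of `V`: an arrival
at `Q = B` leaves the queue at `B = min (Q + 1) B`, and a departure at `Q = 0` leaves it
at `0 = Q - 1` (truncated subtraction). -/
theorem wStep_eq_of_le (p : MDPParams) (V : ℕ → ℕ → ℕ → ℝ) (S a : ℕ) {Q : ℕ}
    (hQ : Q ≤ p.B) :
    wStep p V S Q a = p.ω * Q + a * p.Eon + p.r *
      ((∑ S' ∈ (Finset.Icc 1 p.N).erase S, p.sig S S' * p.Δ * V S' Q a)
        + p.lam S * p.Δ * V S (min (Q + 1) p.B) a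
        + a * p.mu * p.Δ * V S (Q - 1) a
        + (1 - a * p.mu * p.Δ - p.lam S * p.Δ - p.phaseExitRate S * p.Δ) * V S Q a) := by
  unfold wStep MDPParams.phaseExitRate
  rcases hQ.lt_or_eq with hlt | rfl
  · rw [if_pos hlt, min_eq_left hlt]
    rcases Nat.eq_zero_or_pos Q with rfl | hpos
    · simp only [lt_irrefl, if_false, Nat.zero_sub]
      ring
    · rw [if_pos hpos]
      ring
  · rw [if_neg (lt_irrefl _), min_eq_right (Nat.le_succ _)]
    rcases Nat.eq_zero_or_pos p.B with h0 | hpos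
    · simp only [h0, lt_irrefl, if_false, Nat.zero_sub]
      ring
    · rw [if_pos hpos]
      ring

theorem wStep_monotoneOn (p : MDPParams) (V : ℕ → ℕ → ℕ → ℝ) {S a : ℕ}
    (hS : S ∈ Finset.Icc 1 p.N) (ha : a ≤ p.M)
    (hV : ∀ S' ∈ Finset.Icc 1 p.N, MonotoneOn (fun Q => V S' Q a) (Set.Iic p.B))
    (hlam : ∀ S ∈ Finset.Icc 1 p.N, 0 ≤ p.lam S)
    (hsig : ∀ S S', S ≠ S' → 0 ≤ p.sig S S')
    (hmu : 0 ≤ p.mu) (hΔ : 0 ≤ p.Δ) (hr0 : 0 ≤ p.r) (hω : 0 ≤ p.ω)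
    (hsmall : p.M * p.mu * p.Δ + p.lam S * p.Δ + p.phaseExitRate S * p.Δ ≤ 1) :
    MonotoneOn (fun Q => wStep p V S Q a) (Set.Iic p.B) := by
  intro Q₁ hQ₁ Q₂ hQ₂ hQ
  have hQ₂B : Q₂ ≤ p.B := hQ₂
  have hstay : 0 ≤ 1 - a * p.mu * p.Δ - p.lam S * p.Δ - p.phaseExitRate S * p.Δ := by
    have : (a : ℝ) * p.mu * p.Δ ≤ p.M * p.mu * p.Δ := by gcongr
    linarith
  simp only [wStep_eq_of_le p V S a hQ₁, wStep_eq_of_le p V S a hQ₂]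
  gcongr with S' hS'
  · exact mul_nonneg (hsig S S' (Finset.ne_of_mem_erase hS').symm) hΔ
  · exact hV S' (Finset.mem_of_mem_erase hS') (show Q₁ ≤ p.B by omega) hQ₂ hQ
  · exact mul_nonneg (hlam S hS) hΔ
  · exact hV S hS (min_le_right (Q₁ + 1) p.B) (min_le_right (Q₂ + 1) p.B) (by omega)
  · exact hV S hS (show Q₁ - 1 ≤ p.B by omega) (show Q₂ - 1 ≤ p.B by omega) (by omega)
  · exact hV S hS hQ₁ hQ₂ hQ

theorem costToGo_monotone_in_queue_general (p : MDPParams)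
    (hlam : ∀ S ∈ Finset.Icc 1 p.N, 0 ≤ p.lam S)
    (hsig : ∀ S S', S ≠ S' → 0 ≤ p.sig S S')
    (hmu : 0 ≤ p.mu) (hΔ : 0 < p.Δ) (hr0 : 0 ≤ p.r)
    (hω : 0 ≤ p.ω)
    (hsmall : ∀ S ∈ Finset.Icc 1 p.N,
      (p.M : ℝ) * p.mu * p.Δ + p.lam S * p.Δ
        + (∑ S' ∈ (Finset.Icc 1 p.N).erase S, p.sig S S') * p.Δ ≤ 1) :
    ∀ t : ℕ, ∀ S ∈ Finset.Icc 1 p.N, ∀ W ≤ p.M, ∀ Q1 Q2, Q1 ≤ Q2 → Q2 ≤ p.B →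
      Vit p t S Q1 W ≤ Vit p t S Q2 W := by
  intro t
  induction t with
  | zero => simp [Vit]
  | succ t ih =>
    intro S hS W _ Q1 Q2 hQ hQ2
    have hw (a) (ha : a ∈ Finset.Iic p.M) :
        MonotoneOn (fun Q => wStep p (Vit p t) S Q a) (Set.Iic p.B) :=
      wStep_monotoneOn p (Vit p t) hS (Finset.mem_Iic.1 ha)
        (fun S' hS' q₁ _ q₂ hq₂ hq => ih S' hS' a (Finset.mem_Iic.1 ha) q₁ q₂ hq hq₂)
        hlam hsig hmu hΔ.le hr0 hω (hsmall S hS)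
    exact Finset.inf'_mono_fun (hs := Finset.nonempty_Iic) fun a ha =>
      add_le_add_right (hw a ha (hQ.trans hQ2) hQ2 hQ) _

/-- **Monotonicity of the cost-to-go in the queue length:** for every horizon `t`, phase
`S` and server count `W`, the map `Q ↦ V_t(S,Q,W)` is nondecreasing on `{0,…,B}`. -/
theorem costToGo_monotone_in_queue (p : MDPParams)
    (hN : 1 ≤ p.N) (hM : 1 ≤ p.M) (hB : 1 ≤ p.B)
    (hlam : ∀ S ∈ Finset.Icc 1 p.N, 0 ≤ p.lam S)
    (hsig : ∀ S S', S ≠ S' → 0 ≤ p.sig S S')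
    (hmu : 0 ≤ p.mu) (hΔ : 0 < p.Δ) (hr0 : 0 ≤ p.r) (hr1 : p.r < 1)
    (hω : 0 ≤ p.ω) (hEon : 0 ≤ p.Eon) (hEsw : 0 ≤ p.Esw)
    (hsmall : ∀ S ∈ Finset.Icc 1 p.N,
      (p.M : ℝ) * p.mu * p.Δ + p.lam S * p.Δ
        + (∑ S' ∈ (Finset.Icc 1 p.N).erase S, p.sig S S') * p.Δ ≤ 1) :
    ∀ t : ℕ, ∀ S ∈ Finset.Icc 1 p.N, ∀ W ≤ p.M, ∀ Q1 Q2, Q1 ≤ Q2 → Q2 ≤ p.B →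
      Vit p t S Q1 W ≤ Vit p t S Q2 W :=
  costToGo_monotone_in_queue_general p hlam hsig hmu hΔ hr0 hω hsmall
end

section
/- Fix t ≥ 0 and suppose V_t satisfies: (ii) for all S, all Q1 ≤ Q2 ≤ B and W1 ≤ W2 ≤ M, V_t(S,Q2,W1) − V_t(S,Q1,W1) ≥ V_t(S,Q2,W2) − V_t(S,Q1,W2); and (iii) for all S, 0 ≤ V'_t(S,Q,0) for Q < B and V'_t(S,Q,0) ≤ V'_t(S,Q+1,M) for Q+2 ≤ B. Then for all S, all actions a ≤ b in {0,…,M}, and all Q with 1 ≤ Q and Q+2 ≤ B: w'_t(S,Q,b) − w'_t(S,Q,a) ≤ −r·μ·(b−a)·Δ·(V'_t(S,Q,b) − V'_t(S,Q−1,b)). -/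
open Finset Filter Topology

/-- **Equation (13) in the induction step of Theorem 1:** under the induction hypotheses
(ii) and (iii) on `V_t`, for actions `a ≤ b`,
`w'_t(S,Q,b) − w'_t(S,Q,a) ≤ −r·μ·(b−a)·Δ·(V'_t(S,Q,b) − V'_t(S,Q−1,b))`. -/
theorem wStep_increment_difference_bound (p : MDPParams)
    (hN : 1 ≤ p.N) (hM : 1 ≤ p.M) (hB : 1 ≤ p.B)
    (hlam : ∀ S ∈ Finset.Icc 1 p.N, 0 ≤ p.lam S)
    (hsig : ∀ S S', S ≠ S' → 0 ≤ p.sig S S')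
    (hmu : 0 ≤ p.mu) (hΔ : 0 < p.Δ) (hr0 : 0 ≤ p.r) (hr1 : p.r < 1)
    (hω : 0 ≤ p.ω) (hEon : 0 ≤ p.Eon) (hEsw : 0 ≤ p.Esw)
    (hsmall : ∀ S ∈ Finset.Icc 1 p.N,
      (p.M : ℝ) * p.mu * p.Δ + p.lam S * p.Δ
        + (∑ S' ∈ (Finset.Icc 1 p.N).erase S, p.sig S S') * p.Δ ≤ 1)
    (t : ℕ)
    (hii : ∀ S ∈ Finset.Icc 1 p.N, ∀ Q1 Q2, Q1 ≤ Q2 → Q2 ≤ p.B →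
      ∀ W1 W2, W1 ≤ W2 → W2 ≤ p.M →
        Vit p t S Q2 W1 - Vit p t S Q1 W1 ≥ Vit p t S Q2 W2 - Vit p t S Q1 W2)
    (hiii : ∀ S ∈ Finset.Icc 1 p.N,
      (∀ Q < p.B, 0 ≤ Vit p t S (Q + 1) 0 - Vit p t S Q 0) ∧
      (∀ Q, Q + 2 ≤ p.B →
        Vit p t S (Q + 1) 0 - Vit p t S Q 0 ≤
          Vit p t S (Q + 2) p.M - Vit p t S (Q + 1) p.M)) :
    ∀ S ∈ Finset.Icc 1 p.N, ∀ a b, a ≤ b → b ≤ p.M → ∀ Q, 1 ≤ Q → Q + 2 ≤ p.B →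
      (wStep p (Vit p t) S (Q + 1) b - wStep p (Vit p t) S Q b)
        - (wStep p (Vit p t) S (Q + 1) a - wStep p (Vit p t) S Q a) ≤
      -(p.r * p.mu * ((b : ℝ) - (a : ℝ)) * p.Δ *
        ((Vit p t S (Q + 1) b - Vit p t S Q b)
          - (Vit p t S Q b - Vit p t S (Q - 1) b))) := by
  intro S hS a b hab hbM Q hQ1 hQB
  obtain ⟨Q', rfl⟩ : ∃ Q', Q = Q' + 1 := ⟨Q - 1, (Nat.succ_pred_eq_of_pos hQ1).symm⟩
  set T := (Finset.Icc 1 p.N).erase S with hT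
  -- the four increment inequalities from (ii)
  have h2 := hii S hS (Q' + 2) (Q' + 3) (by omega) (by omega) a b hab hbM
  have h3 := hii S hS (Q' + 1) (Q' + 2) (by omega) (by omega) a b hab hbM
  have h4 := hii S hS Q' (Q' + 1) (by omega) (by omega) a b hab hbM
  -- the sum inequality
  have hA : (∑ S' ∈ T, p.sig S S' * p.Δ * Vit p t S' (Q' + 2) b)
      - (∑ S' ∈ T, p.sig S S' * p.Δ * Vit p t S' (Q' + 1) b)
      ≤ (∑ S' ∈ T, p.sig S S' * p.Δ * Vit p t S' (Q' + 2) a)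
      - (∑ S' ∈ T, p.sig S S' * p.Δ * Vit p t S' (Q' + 1) a) := by
    rw [← Finset.sum_sub_distrib, ← Finset.sum_sub_distrib]
    apply Finset.sum_le_sum
    intro S' hS'
    have hmem : S' ∈ Finset.Icc 1 p.N := Finset.mem_of_mem_erase hS'
    have hSne : S ≠ S' := Ne.symm (Finset.ne_of_mem_erase hS')
    have h := hii S' hmem (Q' + 1) (Q' + 2) (by omega) (by omega) a b hab hbM
    have hσ : 0 ≤ p.sig S S' * p.Δ := mul_nonneg (hsig S S' hSne) hΔ.le
    nlinarith [mul_le_mul_of_nonneg_left (show Vit p t S' (Q' + 2) b - Vit p t S' (Q' + 1) b ≤ Vit p t S' (Q' + 2) a - Vit p t S' (Q' + 1) a from h) hσ]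
  -- coefficient nonnegativity
  have haM : (a : ℝ) ≤ (p.M : ℝ) := by exact_mod_cast le_trans hab hbM
  have hlamS : 0 ≤ p.lam S := hlam S hS
  have hC : 0 ≤ 1 - (a : ℝ) * p.mu * p.Δ - p.lam S * p.Δ
      - (∑ S' ∈ T, p.sig S S') * p.Δ := by
    have hs := hsmall S hS
    have : (a : ℝ) * p.mu * p.Δ ≤ (p.M : ℝ) * p.mu * p.Δ := by
      have := mul_le_mul_of_nonneg_right (mul_le_mul_of_nonneg_right haM hmu) hΔ.le
      linarith
    rw [← hT] at hs
    linarith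
  have haμΔ : 0 ≤ (a : ℝ) * p.mu * p.Δ :=
    mul_nonneg (mul_nonneg (Nat.cast_nonneg a) hmu) hΔ.le
  have hlamD : 0 ≤ p.lam S * p.Δ := mul_nonneg hlamS hΔ.le
  -- nonneg pieces
  have p1 : 0 ≤ ((∑ S' ∈ T, p.sig S S' * p.Δ * Vit p t S' (Q' + 2) a)
      - (∑ S' ∈ T, p.sig S S' * p.Δ * Vit p t S' (Q' + 1) a))
      - ((∑ S' ∈ T, p.sig S S' * p.Δ * Vit p t S' (Q' + 2) b)
      - (∑ S' ∈ T, p.sig S S' * p.Δ * Vit p t S' (Q' + 1) b)) := by linarith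
  have p2 : 0 ≤ p.lam S * p.Δ * ((Vit p t S (Q' + 3) a - Vit p t S (Q' + 2) a)
      - (Vit p t S (Q' + 3) b - Vit p t S (Q' + 2) b)) := mul_nonneg hlamD (by linarith)
  have p3 : 0 ≤ (1 - (a : ℝ) * p.mu * p.Δ - p.lam S * p.Δ - (∑ S' ∈ T, p.sig S S') * p.Δ)
      * ((Vit p t S (Q' + 2) a - Vit p t S (Q' + 1) a)
      - (Vit p t S (Q' + 2) b - Vit p t S (Q' + 1) b)) := mul_nonneg hC (by linarith)
  have p4 : 0 ≤ (a : ℝ) * p.mu * p.Δ * ((Vit p t S (Q' + 1) a - Vit p t S Q' a)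
      - (Vit p t S (Q' + 1) b - Vit p t S Q' b)) := mul_nonneg haμΔ (by linarith)
  -- key identity
  have key : -(p.r * p.mu * ((b : ℝ) - (a : ℝ)) * p.Δ *
        ((Vit p t S (Q' + 1 + 1) b - Vit p t S (Q' + 1) b)
          - (Vit p t S (Q' + 1) b - Vit p t S (Q' + 1 - 1) b)))
      - ((wStep p (Vit p t) S (Q' + 1 + 1) b - wStep p (Vit p t) S (Q' + 1) b)
        - (wStep p (Vit p t) S (Q' + 1 + 1) a - wStep p (Vit p t) S (Q' + 1) a))
      = p.r * ((((∑ S' ∈ T, p.sig S S' * p.Δ * Vit p t S' (Q' + 2) a)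
            - (∑ S' ∈ T, p.sig S S' * p.Δ * Vit p t S' (Q' + 1) a))
          - ((∑ S' ∈ T, p.sig S S' * p.Δ * Vit p t S' (Q' + 2) b)
            - (∑ S' ∈ T, p.sig S S' * p.Δ * Vit p t S' (Q' + 1) b)))
        + p.lam S * p.Δ * ((Vit p t S (Q' + 3) a - Vit p t S (Q' + 2) a)
            - (Vit p t S (Q' + 3) b - Vit p t S (Q' + 2) b))
        + (1 - (a : ℝ) * p.mu * p.Δ - p.lam S * p.Δ - (∑ S' ∈ T, p.sig S S') * p.Δ)
            * ((Vit p t S (Q' + 2) a - Vit p t S (Q' + 1) a)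
            - (Vit p t S (Q' + 2) b - Vit p t S (Q' + 1) b))
        + (a : ℝ) * p.mu * p.Δ * ((Vit p t S (Q' + 1) a - Vit p t S Q' a)
            - (Vit p t S (Q' + 1) b - Vit p t S Q' b))) := by
    have e1 : (if Q' + 1 < p.B then (1 : ℝ) else 0) = 1 := if_pos (by omega)
    have e2 : (if Q' + 1 + 1 < p.B then (1 : ℝ) else 0) = 1 := if_pos (by omega)
    have e3 : (if 0 < Q' + 1 then (1 : ℝ) else 0) = 1 := if_pos (by omega)
    have e4 : (if 0 < Q' + 1 + 1 then (1 : ℝ) else 0) = 1 := if_pos (by omega)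
    simp only [wStep, ← hT, e1, e2, e3, e4,
      show Q' + 1 - 1 = Q' from rfl, show Q' + 1 + 1 - 1 = Q' + 1 from rfl,
      show Q' + 1 + 1 = Q' + 2 from rfl, show Q' + 2 + 1 = Q' + 3 from rfl]
    ring
  have hfinal : 0 ≤ -(p.r * p.mu * ((b : ℝ) - (a : ℝ)) * p.Δ *
        ((Vit p t S (Q' + 1 + 1) b - Vit p t S (Q' + 1) b)
          - (Vit p t S (Q' + 1) b - Vit p t S (Q' + 1 - 1) b)))
      - ((wStep p (Vit p t) S (Q' + 1 + 1) b - wStep p (Vit p t) S (Q' + 1) b)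
        - (wStep p (Vit p t) S (Q' + 1 + 1) a - wStep p (Vit p t) S (Q' + 1) a)) := by
    rw [key]
    exact mul_nonneg hr0 (by linarith)
  linarith
end

section
/- Fix t ≥ 0 and suppose V_t satisfies: (ii) for all S, all Q1 ≤ Q2 ≤ B and W1 ≤ W2 ≤ M, V_t(S,Q2,W1) − V_t(S,Q1,W1) ≥ V_t(S,Q2,W2) − V_t(S,Q1,W2); and (iii) for all S, 0 ≤ V'_t(S,Q,0) for Q < B and V'_t(S,Q,0) ≤ V'_t(S,Q+1,M) for Q+2 ≤ B. Then w_t is submodular in (Q,a): for all S, all a ≤ b in {0,…,M}, and all Q < B, w_t(S,Q+1,b) − w_t(S,Q,b) ≤ w_t(S,Q+1,a) − w_t(S,Q,a). -/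
open Finset Filter Topology

/-!
Write `V'` for the forward difference in `Q`. The uniformised recursion gives
`w'(S,Q,a) = ω + r·(Σ σΔ·V'(S',Q,a) + c·V'(S,Q,a) + λΔ·V'(S,Q+1,a) + aμΔ·V'(S,Q−1,a))`
with a nonnegative stay coefficient `c = stayCoeff`. In `w'(S,Q,a) − w'(S,Q,b)` for `a ≤ b`,
every term is a nonnegative coefficient times `V'(·,a) − V'(·,b) ≥ 0` (hypothesis (ii)), except
`(b−a)μΔ·(V'(S,Q,b) − V'(S,Q−1,b))`. For `Q > 0` this is nonnegative because chaining (ii)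
through `W = 0` and `W = M` with (iii) makes `V'` nondecreasing in `Q`; for `Q = 0` it needs
`V'(S,0,b) ≥ 0`, i.e. that `V_t` is nondecreasing in `Q`, which value iteration preserves.
-/

/-- The paper's `V'`. -/
def qDiff (V : ℕ → ℕ → ℕ → ℝ) (S Q W : ℕ) : ℝ := V S (Q + 1) W - V S Q W

lemma ite_one_zero_mul_nonneg {c : Prop} [Decidable c] {x : ℝ} (h : c → 0 ≤ x) :
    0 ≤ (if c then (1 : ℝ) else 0) * x := by
  split_ifs with hc
  · simpa using h hc
  · simp

noncomputable def stayCoeff (p : MDPParams) (S Q a : ℕ) : ℝ :=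
  1 - (a : ℝ) * p.mu * p.Δ - p.lam S * p.Δ * (if Q < p.B then (1 : ℝ) else 0)
    - (∑ S' ∈ (Icc 1 p.N).erase S, p.sig S S') * p.Δ

lemma stayCoeff_nonneg (p : MDPParams) {S : ℕ} (hS : S ∈ Icc 1 p.N)
    (hlam : ∀ S ∈ Icc 1 p.N, 0 ≤ p.lam S) (hmu : 0 ≤ p.mu) (hΔ : 0 ≤ p.Δ)
    (hsmall : ∀ S ∈ Icc 1 p.N,
      (p.M : ℝ) * p.mu * p.Δ + p.lam S * p.Δ
        + (∑ S' ∈ (Icc 1 p.N).erase S, p.sig S S') * p.Δ ≤ 1)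
    (Q : ℕ) {a : ℕ} (ha : a ≤ p.M) : 0 ≤ stayCoeff p S Q a := by
  have hservice : (a : ℝ) * p.mu * p.Δ ≤ p.M * p.mu * p.Δ := by gcongr
  have harrival : p.lam S * p.Δ * (if Q < p.B then (1 : ℝ) else 0) ≤ p.lam S * p.Δ :=
    mul_le_of_le_one_right (mul_nonneg (hlam S hS) hΔ) (by split_ifs <;> norm_num)
  unfold stayCoeff
  linarith [hsmall S hS]

lemma qDiff_wStep (p : MDPParams) (V : ℕ → ℕ → ℕ → ℝ) (S Q a : ℕ) :
    qDiff (wStep p V) S Q a = p.ω + p.r *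
      ((∑ S' ∈ (Icc 1 p.N).erase S, p.sig S S' * p.Δ * qDiff V S' Q a)
        + stayCoeff p S Q a * qDiff V S Q a
        + p.lam S * p.Δ * (if Q + 1 < p.B then (1 : ℝ) else 0) * qDiff V S (Q + 1) a
        + (a : ℝ) * p.mu * p.Δ * (if 0 < Q then (1 : ℝ) else 0) * qDiff V S (Q - 1) a) := by
  rcases Q with _ | q <;>
  · simp only [qDiff, wStep, stayCoeff, mul_sub, sum_sub_distrib, Nat.zero_lt_succ,
      lt_self_iff_false, ↓reduceIte, Nat.add_sub_cancel, Nat.cast_succ]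
    ring

lemma qDiff_wStep_nonneg (p : MDPParams) (V : ℕ → ℕ → ℕ → ℝ)
    (hlam : ∀ S ∈ Icc 1 p.N, 0 ≤ p.lam S) (hsig : ∀ S S', S ≠ S' → 0 ≤ p.sig S S')
    (hmu : 0 ≤ p.mu) (hΔ : 0 ≤ p.Δ) (hr0 : 0 ≤ p.r) (hω : 0 ≤ p.ω)
    (hsmall : ∀ S ∈ Icc 1 p.N,
      (p.M : ℝ) * p.mu * p.Δ + p.lam S * p.Δ
        + (∑ S' ∈ (Icc 1 p.N).erase S, p.sig S S') * p.Δ ≤ 1)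
    {S a : ℕ} (hS : S ∈ Icc 1 p.N) (ha : a ≤ p.M)
    (hV : ∀ S' ∈ Icc 1 p.N, ∀ Q, 0 ≤ qDiff V S' Q a) (Q : ℕ) :
    0 ≤ qDiff (wStep p V) S Q a := by
  rw [qDiff_wStep]
  refine add_nonneg hω (mul_nonneg hr0 (add_nonneg (add_nonneg (add_nonneg ?_ ?_) ?_) ?_))
  · refine sum_nonneg fun S' hS' => mul_nonneg (mul_nonneg ?_ hΔ) (hV S' (mem_of_mem_erase hS') Q)
    exact hsig S S' (ne_of_mem_erase hS').symm
  · exact mul_nonneg (stayCoeff_nonneg p hS hlam hmu hΔ hsmall Q ha) (hV S hS Q)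
  · rw [mul_assoc]
    exact mul_nonneg (mul_nonneg (hlam S hS) hΔ) (ite_one_zero_mul_nonneg fun _ => hV S hS _)
  · rw [mul_assoc]
    exact mul_nonneg (by positivity) (ite_one_zero_mul_nonneg fun _ => hV S hS _)

lemma qDiff_Vit_nonneg (p : MDPParams)
    (hlam : ∀ S ∈ Icc 1 p.N, 0 ≤ p.lam S) (hsig : ∀ S S', S ≠ S' → 0 ≤ p.sig S S')
    (hmu : 0 ≤ p.mu) (hΔ : 0 ≤ p.Δ) (hr0 : 0 ≤ p.r) (hω : 0 ≤ p.ω)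
    (hsmall : ∀ S ∈ Icc 1 p.N,
      (p.M : ℝ) * p.mu * p.Δ + p.lam S * p.Δ
        + (∑ S' ∈ (Icc 1 p.N).erase S, p.sig S S') * p.Δ ≤ 1)
    (t : ℕ) : ∀ S ∈ Icc 1 p.N, ∀ Q W, 0 ≤ qDiff (Vit p t) S Q W := by
  induction t with
  | zero => simp [qDiff, Vit]
  | succ t ih =>
    intro S hS Q W
    rw [qDiff, sub_nonneg]
    refine inf'_mono_fun (hs := nonempty_Iic) fun a ha => add_le_add_right (sub_nonneg.1 ?_) _
    exact qDiff_wStep_nonneg p _ hlam hsig hmu hΔ hr0 hω hsmall hS (mem_Iic.1 ha)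
      (fun S' hS' Q' => ih S' hS' Q' a) Q

lemma qDiff_wStep_sub_qDiff_wStep (p : MDPParams) (V : ℕ → ℕ → ℕ → ℝ) (S Q a b : ℕ) :
    qDiff (wStep p V) S Q a - qDiff (wStep p V) S Q b = p.r *
      ((∑ S' ∈ (Icc 1 p.N).erase S, p.sig S S' * p.Δ * (qDiff V S' Q a - qDiff V S' Q b))
        + stayCoeff p S Q a * (qDiff V S Q a - qDiff V S Q b)
        + p.lam S * p.Δ * ((if Q + 1 < p.B then (1 : ℝ) else 0)
            * (qDiff V S (Q + 1) a - qDiff V S (Q + 1) b))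
        + (a : ℝ) * p.mu * p.Δ * ((if 0 < Q then (1 : ℝ) else 0)
            * (qDiff V S (Q - 1) a - qDiff V S (Q - 1) b))
        + ((b : ℝ) - a) * p.mu * p.Δ
            * (qDiff V S Q b - (if 0 < Q then (1 : ℝ) else 0) * qDiff V S (Q - 1) b)) := by
  simp only [qDiff_wStep, stayCoeff, mul_sub, sum_sub_distrib]
  ring

lemma qDiff_le_qDiff_succ (p : MDPParams) (V : ℕ → ℕ → ℕ → ℝ) {S b q : ℕ} (hb : b ≤ p.M)
    (hanti : ∀ Q, Q + 1 ≤ p.B → ∀ W1 W2, W1 ≤ W2 → W2 ≤ p.M → qDiff V S Q W2 ≤ qDiff V S Q W1)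
    (hlink : qDiff V S q 0 ≤ qDiff V S (q + 1) p.M) (hq : q + 2 ≤ p.B) :
    qDiff V S q b ≤ qDiff V S (q + 1) b :=
  calc qDiff V S q b ≤ qDiff V S q 0 := hanti q (by omega) 0 b (Nat.zero_le b) hb
    _ ≤ qDiff V S (q + 1) p.M := hlink
    _ ≤ qDiff V S (q + 1) b := hanti (q + 1) hq b p.M hb le_rfl

lemma qDiff_wStep_le_of_le (p : MDPParams) (V : ℕ → ℕ → ℕ → ℝ)
    (hlam : ∀ S ∈ Icc 1 p.N, 0 ≤ p.lam S) (hsig : ∀ S S', S ≠ S' → 0 ≤ p.sig S S')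
    (hmu : 0 ≤ p.mu) (hΔ : 0 ≤ p.Δ) (hr0 : 0 ≤ p.r)
    (hsmall : ∀ S ∈ Icc 1 p.N,
      (p.M : ℝ) * p.mu * p.Δ + p.lam S * p.Δ
        + (∑ S' ∈ (Icc 1 p.N).erase S, p.sig S S') * p.Δ ≤ 1)
    {S a b Q : ℕ} (hS : S ∈ Icc 1 p.N) (hab : a ≤ b) (hb : b ≤ p.M) (hQ : Q < p.B)
    (hanti : ∀ S' ∈ Icc 1 p.N, ∀ Q', Q' + 1 ≤ p.B → qDiff V S' Q' b ≤ qDiff V S' Q' a)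
    (hzero : 0 ≤ qDiff V S 0 b)
    (hconv : ∀ q, q + 2 ≤ p.B → qDiff V S q b ≤ qDiff V S (q + 1) b) :
    qDiff (wStep p V) S Q b ≤ qDiff (wStep p V) S Q a := by
  rw [← sub_nonneg, qDiff_wStep_sub_qDiff_wStep]
  have hdiff : ∀ S' ∈ Icc 1 p.N, ∀ Q', Q' + 1 ≤ p.B → 0 ≤ qDiff V S' Q' a - qDiff V S' Q' b :=
    fun S' hS' Q' hQ' => sub_nonneg.2 (hanti S' hS' Q' hQ')
  refine mul_nonneg hr0 (add_nonneg (add_nonneg (add_nonneg (add_nonneg ?_ ?_) ?_) ?_) ?_)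
  · refine sum_nonneg fun S' hS' => mul_nonneg (mul_nonneg ?_ hΔ) ?_
    · exact hsig S S' (ne_of_mem_erase hS').symm
    · exact hdiff S' (mem_of_mem_erase hS') Q hQ
  · exact mul_nonneg (stayCoeff_nonneg p hS hlam hmu hΔ hsmall Q (hab.trans hb)) (hdiff S hS Q hQ)
  · exact mul_nonneg (mul_nonneg (hlam S hS) hΔ) (ite_one_zero_mul_nonneg (hdiff S hS _))
  · exact mul_nonneg (by positivity) (ite_one_zero_mul_nonneg fun _ => hdiff S hS _ (by omega))
  · have hba : (0 : ℝ) ≤ b - a := sub_nonneg.2 (Nat.cast_le.2 hab)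
    refine mul_nonneg (mul_nonneg (mul_nonneg hba hmu) hΔ) (sub_nonneg.2 ?_)
    rcases Q with _ | q
    · simpa using hzero
    · simpa using hconv q hQ

theorem wStep_submodular_Qa_general (p : MDPParams)
    (hlam : ∀ S ∈ Finset.Icc 1 p.N, 0 ≤ p.lam S)
    (hsig : ∀ S S', S ≠ S' → 0 ≤ p.sig S S')
    (hmu : 0 ≤ p.mu) (hΔ : 0 < p.Δ) (hr0 : 0 ≤ p.r) (hω : 0 ≤ p.ω)
    (hsmall : ∀ S ∈ Finset.Icc 1 p.N,
      (p.M : ℝ) * p.mu * p.Δ + p.lam S * p.Δ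
        + (∑ S' ∈ (Finset.Icc 1 p.N).erase S, p.sig S S') * p.Δ ≤ 1)
    (t : ℕ)
    (hii : ∀ S ∈ Finset.Icc 1 p.N, ∀ Q1 Q2, Q1 ≤ Q2 → Q2 ≤ p.B →
      ∀ W1 W2, W1 ≤ W2 → W2 ≤ p.M →
        Vit p t S Q2 W1 - Vit p t S Q1 W1 ≥ Vit p t S Q2 W2 - Vit p t S Q1 W2)
    (hiii : ∀ S ∈ Finset.Icc 1 p.N,
      (∀ Q < p.B, 0 ≤ Vit p t S (Q + 1) 0 - Vit p t S Q 0) ∧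
      (∀ Q, Q + 2 ≤ p.B →
        Vit p t S (Q + 1) 0 - Vit p t S Q 0 ≤
          Vit p t S (Q + 2) p.M - Vit p t S (Q + 1) p.M)) :
    ∀ S ∈ Finset.Icc 1 p.N, ∀ a b, a ≤ b → b ≤ p.M → ∀ Q < p.B,
      wStep p (Vit p t) S (Q + 1) b - wStep p (Vit p t) S Q b ≤
        wStep p (Vit p t) S (Q + 1) a - wStep p (Vit p t) S Q a := by
  intro S hS a b hab hb Q hQ
  have hanti : ∀ S' ∈ Icc 1 p.N, ∀ Q', Q' + 1 ≤ p.B → ∀ W1 W2, W1 ≤ W2 → W2 ≤ p.M →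
      qDiff (Vit p t) S' Q' W2 ≤ qDiff (Vit p t) S' Q' W1 :=
    fun S' hS' Q' hQ' => hii S' hS' Q' (Q' + 1) Q'.le_succ hQ'
  have hmono := qDiff_Vit_nonneg p hlam hsig hmu hΔ.le hr0 hω hsmall t
  exact qDiff_wStep_le_of_le p _ hlam hsig hmu hΔ.le hr0 hsmall hS hab hb hQ
    (fun S' hS' Q' hQ' => hanti S' hS' Q' hQ' a b hab hb) (hmono S hS 0 b)
    (fun q hq => qDiff_le_qDiff_succ p _ hb (hanti S hS) ((hiii S hS).2 q hq) hq)

/-- **Submodularity of `w_t` in `(Q,a)`:** under the induction hypotheses (ii) and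
(iii) on `V_t`, for actions `a ≤ b` and `Q < B`,
`w_t(S,Q+1,b) − w_t(S,Q,b) ≤ w_t(S,Q+1,a) − w_t(S,Q,a)`. -/
theorem wStep_submodular_Qa (p : MDPParams)
    (hN : 1 ≤ p.N) (hM : 1 ≤ p.M) (hB : 1 ≤ p.B)
    (hlam : ∀ S ∈ Finset.Icc 1 p.N, 0 ≤ p.lam S)
    (hsig : ∀ S S', S ≠ S' → 0 ≤ p.sig S S')
    (hmu : 0 ≤ p.mu) (hΔ : 0 < p.Δ) (hr0 : 0 ≤ p.r) (hr1 : p.r < 1)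
    (hω : 0 ≤ p.ω) (hEon : 0 ≤ p.Eon) (hEsw : 0 ≤ p.Esw)
    (hsmall : ∀ S ∈ Finset.Icc 1 p.N,
      (p.M : ℝ) * p.mu * p.Δ + p.lam S * p.Δ
        + (∑ S' ∈ (Finset.Icc 1 p.N).erase S, p.sig S S') * p.Δ ≤ 1)
    (t : ℕ)
    (hii : ∀ S ∈ Finset.Icc 1 p.N, ∀ Q1 Q2, Q1 ≤ Q2 → Q2 ≤ p.B →
      ∀ W1 W2, W1 ≤ W2 → W2 ≤ p.M →
        Vit p t S Q2 W1 - Vit p t S Q1 W1 ≥ Vit p t S Q2 W2 - Vit p t S Q1 W2)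
    (hiii : ∀ S ∈ Finset.Icc 1 p.N,
      (∀ Q < p.B, 0 ≤ Vit p t S (Q + 1) 0 - Vit p t S Q 0) ∧
      (∀ Q, Q + 2 ≤ p.B →
        Vit p t S (Q + 1) 0 - Vit p t S Q 0 ≤
          Vit p t S (Q + 2) p.M - Vit p t S (Q + 1) p.M)) :
    ∀ S ∈ Finset.Icc 1 p.N, ∀ a b, a ≤ b → b ≤ p.M → ∀ Q < p.B,
      wStep p (Vit p t) S (Q + 1) b - wStep p (Vit p t) S Q b ≤
        wStep p (Vit p t) S (Q + 1) a - wStep p (Vit p t) S Q a :=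
  wStep_submodular_Qa_general p hlam hsig hmu hΔ hr0 hω hsmall t hii hiii
end

section
/- Let M be a natural number, E_sw ≥ 0, s(W,a) = max(a−W,0)·E_sw, and let w : {0,…,M} → ℝ be arbitrary. If a ∈ {0,…,M} minimizes b ↦ s(W,b) + w(b) over {0,…,M} for some W ∈ {0,…,M}, then a also minimizes b ↦ s(a,b) + w(b) over {0,…,M}. -/
/-- **Hysteretic property of the optimal policy.**
If `a` minimizes `b ↦ s(W,b) + w(b)` over `{0,…,M}` for some current server count `W`,
then `a` also minimizes `b ↦ s(a,b) + w(b)` over `{0,…,M}`. -/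
theorem hysteretic_optimal_action
    (M : ℕ) (Esw : ℝ) (hEsw : 0 ≤ Esw) (s : ℕ → ℕ → ℝ)
    (hs : ∀ W a, s W a = ((a - W : ℕ) : ℝ) * Esw)
    (w : ℕ → ℝ) (W a : ℕ) (hW : W ≤ M) (ha : a ≤ M)
    (hmin : ∀ b ≤ M, s W a + w a ≤ s W b + w b) :
    ∀ b ≤ M, s a a + w a ≤ s a b + w b := by
  intro b hb
  have key : s W b ≤ s W a + s a b := by
    rw [hs, hs, hs, ← add_mul]
    apply mul_le_mul_of_nonneg_right _ hEsw
    have : b - W ≤ (a - W) + (b - a) := by omega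
    exact_mod_cast Nat.cast_le.mpr this
  have haa : s a a = 0 := by simp [hs]
  have := hmin b hb
  rw [haa]
  linarith
end

section
/- Let V_∞(S,Q,W) = lim_{t→∞} V_t(S,Q,W) (the limit exists), and define u_∞(S,Q,W,a) = s(W,a) + w_∞(S,Q,a) from V_∞ by the same formulas used to define u_t from V_t. Then for every phase S ∈ {1,…,N}, every Q ∈ {0,…,B}, and every W ∈ {0,…,M}: if a minimizes b ↦ u_∞(S,Q,W,b) over {0,…,M}, then a minimizes b ↦ u_∞(S,Q,a,b) over {0,…,M}. -/
open Finset Filter Topology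

/-- **Hysteretic property of the optimal infinite-horizon policy:** with
`u_∞(S,Q,W,a) = s(W,a) + w_∞(S,Q,a)` built from `V_∞ = lim_t V_t`, if `a` minimizes
`b ↦ u_∞(S,Q,W,b)` over `{0,…,M}`, then `a` minimizes `b ↦ u_∞(S,Q,a,b)`. -/
theorem hysteretic_optimal_policy_infinite_horizon (p : MDPParams)
    (hN : 1 ≤ p.N) (hM : 1 ≤ p.M) (hB : 1 ≤ p.B)
    (hlam : ∀ S ∈ Finset.Icc 1 p.N, 0 ≤ p.lam S)
    (hsig : ∀ S S', S ≠ S' → 0 ≤ p.sig S S')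
    (hmu : 0 ≤ p.mu) (hΔ : 0 < p.Δ) (hr0 : 0 ≤ p.r) (hr1 : p.r < 1)
    (hω : 0 ≤ p.ω) (hEon : 0 ≤ p.Eon) (hEsw : 0 ≤ p.Esw)
    (hsmall : ∀ S ∈ Finset.Icc 1 p.N,
      (p.M : ℝ) * p.mu * p.Δ + p.lam S * p.Δ
        + (∑ S' ∈ (Finset.Icc 1 p.N).erase S, p.sig S S') * p.Δ ≤ 1)
    (Vinf : ℕ → ℕ → ℕ → ℝ)
    (hlim : ∀ S ∈ Finset.Icc 1 p.N, ∀ Q ≤ p.B, ∀ W ≤ p.M,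
      Filter.Tendsto (fun t => Vit p t S Q W) Filter.atTop (nhds (Vinf S Q W))) :
    ∀ S ∈ Finset.Icc 1 p.N, ∀ Q ≤ p.B, ∀ W ≤ p.M, ∀ a ≤ p.M,
      (∀ b ≤ p.M,
        sCost p W a + wStep p Vinf S Q a ≤ sCost p W b + wStep p Vinf S Q b) →
      (∀ b ≤ p.M,
        sCost p a a + wStep p Vinf S Q a ≤ sCost p a b + wStep p Vinf S Q b) := by
  intro S hS Q hQ W hW a ha hmin b hb
  have h := hmin b hb
  have hzero : sCost p a a = 0 := by simp [sCost]
  have hkey : sCost p W b ≤ sCost p W a + sCost p a b := by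
    unfold sCost
    have hn : (b - W : ℕ) ≤ (a - W) + (b - a) := by
      have := tsub_le_tsub_add_tsub (a := b) (b := a) (c := W)
      omega
    have : ((b - W : ℕ) : ℝ) ≤ ((a - W : ℕ) : ℝ) + ((b - a : ℕ) : ℝ) := by
      exact_mod_cast hn
    nlinarith [mul_le_mul_of_nonneg_right this hEsw]
  linarith
end
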